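/- For every n ∈ ℕ, the polynomial B_{n,q} admits the explicit expansion B_{n,q}(X) = Σ_{k=0}^n Σ_{i=0}^k C(n,k) C(k,i) β_{k,q} (q − 1)^i ([n+i−k+1]_q/(n + i − k + 1)) X^{n+i−k}. -/

import Mathlib

open Polynomial Finset

/-- The `q`-analogue `[x]_q = (q^x - 1)/(q - 1)` (real exponent, via `rpow`). -/
noncomputable def qnum (q x : ℝ) : ℝ := (q ^ x - 1) / (q - 1)

/-- The `q`-antiderivative vanishing at `0` of a real polynomial:
`I_q(Σ a_k X^k) = Σ a_k X^(k+1) / [k+1]_q`. -/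
noncomputable def Iq (q : ℝ) (P : Polynomial ℝ) : Polynomial ℝ :=
  P.sum fun k a =>
    Polynomial.C (a / ((q ^ (k + 1) - 1) / (q - 1))) * Polynomial.X ^ (k + 1)

/-- The `n`-th Carlitz `q`-Bernoulli number
`β_{n,q} = (q-1)^{-n} Σ_{k=0}^n (-1)^{n-k} C(n,k) (k+1)/[k+1]_q`. -/
noncomputable def carlitzBetaNum (q : ℝ) (n : ℕ) : ℝ :=
  ((q - 1) ^ n)⁻¹ * ∑ k ∈ Finset.range (n + 1),
    (-1 : ℝ) ^ (n - k) * (n.choose k : ℝ) *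
      (((k : ℝ) + 1) / qnum q ((k : ℝ) + 1))

/- ### Auxiliary lemmas -/

lemma qpow_ne_one {q : ℝ} (hq : 0 < q) (hq1 : q ≠ 1) {m : ℕ} (hm : m ≠ 0) :
    q ^ m ≠ 1 := by
  rcases lt_or_gt_of_ne hq1 with h | h
  · exact ne_of_lt (pow_lt_one₀ hq.le h hm)
  · exact ne_of_gt (one_lt_pow₀ h hm)

lemma qnum_nat {q : ℝ} (hq : 0 < q) (m : ℕ) :
    qnum q (m : ℝ) = (q ^ m - 1) / (q - 1) := by
  rw [qnum, Real.rpow_natCast]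

lemma Iq_add (q : ℝ) (P Q : Polynomial ℝ) : Iq q (P + Q) = Iq q P + Iq q Q := by
  unfold Iq
  apply Polynomial.sum_add_index
  · intro i; simp
  · intro a b₁ b₂; rw [add_div, map_add, add_mul]

noncomputable def IqH (q : ℝ) : Polynomial ℝ →+ Polynomial ℝ :=
  AddMonoidHom.mk' (Iq q) (Iq_add q)

lemma Iq_monomial (q c : ℝ) (m : ℕ) :
    Iq q (Polynomial.C c * Polynomial.X ^ m)
      = Polynomial.C (c / ((q ^ (m + 1) - 1) / (q - 1))) * Polynomial.X ^ (m + 1) := by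
  rw [Iq, Polynomial.C_mul_X_pow_eq_monomial, Polynomial.sum_monomial_index]
  simp

lemma Iq_coeff_zero (q : ℝ) (P : Polynomial ℝ) : (Iq q P).coeff 0 = 0 := by
  rw [Iq, Polynomial.sum, Polynomial.finset_sum_coeff]
  apply Finset.sum_eq_zero
  intro k _
  simp [Polynomial.coeff_C_mul, Polynomial.coeff_X_pow]

lemma Iq_coeff_succ (q : ℝ) (P : Polynomial ℝ) (m : ℕ) :
    (Iq q P).coeff (m + 1) = P.coeff m / ((q ^ (m + 1) - 1) / (q - 1)) := by
  rw [Iq, Polynomial.sum, Polynomial.finset_sum_coeff]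
  simp only [Polynomial.coeff_C_mul, Polynomial.coeff_X_pow]
  have : ∀ k ∈ P.support,
      P.coeff k / ((q ^ (k + 1) - 1) / (q - 1)) * (if m + 1 = k + 1 then (1:ℝ) else 0)
        = if k = m then P.coeff k / ((q ^ (k + 1) - 1) / (q - 1)) else 0 := by
    intro k _
    by_cases h : k = m
    · simp [h]
    · rw [if_neg (by omega : ¬ m + 1 = k + 1), if_neg h, mul_zero]
  rw [Finset.sum_congr rfl this, Finset.sum_ite_eq' P.support m]
  by_cases hm : m ∈ P.support
  · simp [hm]
  · simp [hm, Polynomial.notMem_support_iff.mp hm]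

lemma Iq_inj {q : ℝ} (hq : 0 < q) (hq1 : q ≠ 1) {P Q : Polynomial ℝ}
    (h : Iq q P = Iq q Q) : P = Q := by
  ext m
  have h2 := congrArg (fun r => Polynomial.coeff r (m + 1)) h
  simp only [Iq_coeff_succ] at h2
  have hd : ((q ^ (m + 1) - 1) / (q - 1)) ≠ 0 :=
    div_ne_zero (sub_ne_zero.mpr (qpow_ne_one hq hq1 (Nat.succ_ne_zero m)))
      (sub_ne_zero.mpr hq1)
  exact mul_right_cancel₀ hd ((div_eq_div_iff hd hd).mp h2)

lemma comp_linear_eq_self {q : ℝ} (hq : 0 < q) (hq1 : q ≠ 1) (D : Polynomial ℝ)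
    (h : D.comp (Polynomial.C q * Polynomial.X + 1) = D) (h0 : D.coeff 0 = 0) :
    D = 0 := by
  by_cases hD : D = 0
  · exact hD
  have hq0 : q ≠ 0 := ne_of_gt hq
  have hl : (Polynomial.C q * Polynomial.X + 1 : Polynomial ℝ).natDegree = 1 := by
    have : (Polynomial.C q * Polynomial.X + 1 : Polynomial ℝ)
        = Polynomial.C q * Polynomial.X + Polynomial.C 1 := by simp
    rw [this, Polynomial.natDegree_linear hq0]
  have hlc : (Polynomial.C q * Polynomial.X + 1 : Polynomial ℝ).leadingCoeff = q := by
    have : (Polynomial.C q * Polynomial.X + 1 : Polynomial ℝ)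
        = Polynomial.C q * Polynomial.X + Polynomial.C 1 := by simp
    rw [this, Polynomial.leadingCoeff_linear hq0]
  rcases Nat.eq_zero_or_pos D.natDegree with h0d | hpos
  · rw [Polynomial.eq_C_of_natDegree_eq_zero h0d, h0, map_zero]
  · exfalso
    have hlead := congrArg Polynomial.leadingCoeff h
    rw [Polynomial.leadingCoeff_comp (by rw [hl]; exact one_ne_zero), hlc] at hlead
    have hlcD : D.leadingCoeff ≠ 0 := Polynomial.leadingCoeff_ne_zero.mpr hD
    have hqd : q ^ D.natDegree = 1 := by
      have := mul_left_cancel₀ hlcD (hlead.trans (mul_one D.leadingCoeff).symm)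
      exact this
    exact qpow_ne_one hq hq1 (Nat.pos_iff_ne_zero.mp hpos) hqd

/- ### The candidate polynomial and closed form -/

noncomputable def cB (q : ℝ) (n : ℕ) : Polynomial ℝ :=
  ∑ k ∈ Finset.range (n + 1), ∑ i ∈ Finset.range (k + 1),
    Polynomial.C ((n.choose k : ℝ) * (k.choose i : ℝ) * carlitzBetaNum q k * (q - 1) ^ i *
        (qnum q ((n + i - k + 1 : ℕ) : ℝ) / ((n + i - k + 1 : ℕ) : ℝ))) *
      Polynomial.X ^ (n + i - k)

noncomputable def gPoly (q : ℝ) (n : ℕ) : Polynomial ℝ :=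
  Polynomial.C (((q - 1) ^ n)⁻¹) * ∑ j ∈ Finset.range (n + 1),
    Polynomial.C ((-1 : ℝ) ^ (n - j) * (n.choose j : ℝ) / (q ^ (j + 1) - 1)) *
      ((Polynomial.C (q - 1) * Polynomial.X + 1) ^ (j + 1) - 1)

lemma key_eval {q : ℝ} (hq : 0 < q) (hq1 : q ≠ 1) (n : ℕ) (x : ℝ) :
    ∑ k ∈ Finset.range (n + 1), ∑ i ∈ Finset.range (k + 1),
        (n.choose k : ℝ) * (k.choose i : ℝ) * carlitzBetaNum q k * (q - 1) ^ i *
          x ^ (n + i - k)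
      = ((q - 1) ^ n)⁻¹ * ∑ j ∈ Finset.range (n + 1),
          (-1 : ℝ) ^ (n - j) * (n.choose j : ℝ) *
            (((j : ℝ) + 1) * (q - 1) / (q ^ (j + 1) - 1)) * ((q - 1) * x + 1) ^ j := by
  have hr : q - 1 ≠ 0 := sub_ne_zero.mpr hq1
  set r : ℝ := q - 1 with hrdef
  set u : ℝ := r * x + 1 with hudef
  set g : ℕ → ℝ := fun j => ((j : ℝ) + 1) * r / (q ^ (j + 1) - 1) with hgdef
  set T : ℕ → ℕ → ℝ := fun j k =>
    (n.choose k : ℝ) * ((k.choose j : ℝ) * ((-1 : ℝ) ^ (k - j) * g j)) *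
      ((r ^ k)⁻¹ * (x ^ (n - k) * u ^ k)) with hTdef
  have hg : ∀ j : ℕ, ((j : ℝ) + 1) / qnum q ((j : ℝ) + 1) = g j := by
    intro j
    have hcast : ((j : ℝ) + 1) = ((j + 1 : ℕ) : ℝ) := by push_cast; ring
    rw [hcast, qnum_nat hq, div_div_eq_mul_div, hgdef]
    push_cast; ring
  have step1 : ∀ k ∈ Finset.range (n + 1),
      ∑ i ∈ Finset.range (k + 1),
          (n.choose k : ℝ) * (k.choose i : ℝ) * carlitzBetaNum q k * r ^ i * x ^ (n + i - k)
        = ∑ j ∈ Finset.range (k + 1), T j k := by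
    intro k hk
    rw [Finset.mem_range] at hk
    have hsum1 : ∑ i ∈ Finset.range (k + 1),
        (n.choose k : ℝ) * (k.choose i : ℝ) * carlitzBetaNum q k * r ^ i * x ^ (n + i - k)
        = (n.choose k : ℝ) * carlitzBetaNum q k * (x ^ (n - k) * u ^ k) := by
      have hub : u ^ k
          = ∑ i ∈ Finset.range (k + 1), (r * x) ^ i * 1 ^ (k - i) * ((k.choose i : ℝ)) := by
        rw [hudef, add_pow]
      rw [hub, Finset.mul_sum, Finset.mul_sum]
      apply Finset.sum_congr rfl
      intro i hi
      rw [Finset.mem_range] at hi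
      have he : n + i - k = i + (n - k) := by omega
      rw [he, pow_add, mul_pow, one_pow]
      ring
    rw [hsum1, carlitzBetaNum, ← hrdef]
    simp only [hg]
    rw [Finset.mul_sum, Finset.mul_sum, Finset.sum_mul]
    apply Finset.sum_congr rfl
    intro j _
    rw [hTdef]
    ring
  rw [Finset.sum_congr rfl step1]
  have swap : ∑ k ∈ Finset.range (n + 1), ∑ j ∈ Finset.range (k + 1), T j k
      = ∑ j ∈ Finset.range (n + 1), ∑ k ∈ Finset.Ico j (n + 1), T j k := by
    simp only [Finset.range_eq_Ico]
    exact (Finset.sum_Ico_Ico_comm 0 (n + 1) T).symm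
  rw [swap]
  have step4 : ∀ j ∈ Finset.range (n + 1),
      ∑ k ∈ Finset.Ico j (n + 1), T j k
        = ((r ^ n)⁻¹) * ((-1 : ℝ) ^ (n - j) * (n.choose j : ℝ) * g j * u ^ j) := by
    intro j hj
    rw [Finset.mem_range] at hj
    have hjn : j ≤ n := by omega
    rw [Finset.sum_Ico_eq_sum_range]
    have hterm : ∀ t ∈ Finset.range (n + 1 - j),
        T j (j + t)
          = ((n.choose j : ℝ) * g j * ((r ^ j)⁻¹ * u ^ j)) *
              ((-(u / r)) ^ t * x ^ (n - j - t) * (((n - j).choose t : ℝ))) := by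
      intro t ht
      rw [Finset.mem_range] at ht
      have hch : (n.choose (j + t)) * ((j + t).choose j) = (n.choose j) * ((n - j).choose t) := by
        have h1 := Nat.choose_mul (n := n) (Nat.le_add_right j t)
        simpa [show j + t - j = t by omega] using h1
      have hchR : (n.choose (j + t) : ℝ) * ((j + t).choose j : ℝ)
          = (n.choose j : ℝ) * ((n - j).choose t : ℝ) := by exact_mod_cast hch
      have hsign : ((-1 : ℝ)) ^ (j + t - j) = (-1 : ℝ) ^ t := by
        congr 1; omega
      have hx : n - (j + t) = n - j - t := by omega
      rw [hTdef]
      simp only [hsign, hx, pow_add]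
      have hnu : (-(u / r)) ^ t = (-1 : ℝ) ^ t * (u ^ t * (r ^ t)⁻¹) := by
        rw [neg_pow, div_pow, div_eq_mul_inv]
      rw [hnu]
      linear_combination ((-1 : ℝ) ^ t * g j * ((r ^ j)⁻¹ * (r ^ t)⁻¹) * x ^ (n - j - t)
        * u ^ j * u ^ t) * hchR
    rw [Finset.sum_congr rfl hterm, ← Finset.mul_sum]
    have hwx : -(u / r) + x = -(1 / r) := by
      rw [hudef]; field_simp; ring
    have hpow : ∑ t ∈ Finset.range (n + 1 - j),
        (-(u / r)) ^ t * x ^ (n - j - t) * (((n - j).choose t : ℝ)) = (-(1 / r)) ^ (n - j) := by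
      have hidx : n + 1 - j = (n - j) + 1 := by omega
      rw [hidx, ← add_pow, hwx]
    rw [hpow]
    have hrn : (r ^ j)⁻¹ * (-(1 / r)) ^ (n - j)
        = (-1 : ℝ) ^ (n - j) * (r ^ n)⁻¹ := by
      have : r ^ n = r ^ j * r ^ (n - j) := by
        rw [← pow_add]; congr 1; omega
      rw [this, neg_pow, one_div, inv_pow]
      ring
    calc (n.choose j : ℝ) * g j * ((r ^ j)⁻¹ * u ^ j) * (-(1 / r)) ^ (n - j)
        = (n.choose j : ℝ) * g j * u ^ j * ((r ^ j)⁻¹ * (-(1 / r)) ^ (n - j)) := by ring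
      _ = _ := by rw [hrn]; ring
  rw [Finset.sum_congr rfl step4, ← Finset.mul_sum]

lemma Iq_cB {q : ℝ} (hq : 0 < q) (hq1 : q ≠ 1) (n : ℕ) :
    Iq q (cB q n) = gPoly q n := by
  have hr : q - 1 ≠ 0 := sub_ne_zero.mpr hq1
  have hA : Iq q (cB q n)
      = ∑ k ∈ Finset.range (n + 1), ∑ i ∈ Finset.range (k + 1),
          Polynomial.C ((n.choose k : ℝ) * (k.choose i : ℝ) * carlitzBetaNum q k * (q - 1) ^ i
              / ((n + i - k + 1 : ℕ) : ℝ)) * Polynomial.X ^ (n + i - k + 1) := by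
    rw [cB, show Iq q = ⇑(IqH q) from rfl, map_sum]
    apply Finset.sum_congr rfl; intro k hk
    rw [map_sum]
    apply Finset.sum_congr rfl; intro i hi
    rw [show ⇑(IqH q) = Iq q from rfl, Iq_monomial, qnum_nat hq]
    have hd2 : q ^ (n + i - k + 1) - 1 ≠ 0 :=
      sub_ne_zero.mpr (qpow_ne_one hq hq1 (Nat.succ_ne_zero _))
    have hm : ((n + i - k + 1 : ℕ) : ℝ) ≠ 0 := Nat.cast_ne_zero.mpr (Nat.succ_ne_zero _)
    congr 1
    rw [Polynomial.C_inj]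
    field_simp
  have hdA : Polynomial.derivative (Iq q (cB q n))
      = ∑ k ∈ Finset.range (n + 1), ∑ i ∈ Finset.range (k + 1),
          Polynomial.C ((n.choose k : ℝ) * (k.choose i : ℝ) * carlitzBetaNum q k * (q - 1) ^ i)
            * Polynomial.X ^ (n + i - k) := by
    rw [hA, map_sum]
    apply Finset.sum_congr rfl; intro k _
    rw [map_sum]
    apply Finset.sum_congr rfl; intro i _
    rw [Polynomial.derivative_C_mul_X_pow]
    have hm : ((n + i - k + 1 : ℕ) : ℝ) ≠ 0 := Nat.cast_ne_zero.mpr (Nat.succ_ne_zero _)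
    congr 2
    exact div_mul_cancel₀ _ hm
  have hdG : Polynomial.derivative (Iq q (cB q n)) = Polynomial.derivative (gPoly q n) := by
    apply Polynomial.funext
    intro x
    rw [hdA, gPoly]
    simp only [Polynomial.derivative_mul, Polynomial.derivative_C, zero_mul, zero_add,
      Polynomial.derivative_sum, Polynomial.derivative_sub, Polynomial.derivative_one,
      sub_zero, Polynomial.derivative_pow, Polynomial.derivative_add, Polynomial.derivative_X,
      mul_one, mul_zero, add_zero, Nat.add_sub_cancel]
    simp only [Polynomial.eval_finset_sum, Polynomial.eval_mul, Polynomial.eval_pow,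
      Polynomial.eval_add, Polynomial.eval_C, Polynomial.eval_X, Polynomial.eval_one]
    have hk := key_eval hq hq1 n x
    calc ∑ k ∈ Finset.range (n + 1), ∑ i ∈ Finset.range (k + 1),
          (n.choose k : ℝ) * (k.choose i : ℝ) * carlitzBetaNum q k * (q - 1) ^ i * x ^ (n + i - k)
        = ((q - 1) ^ n)⁻¹ * ∑ j ∈ Finset.range (n + 1),
            (-1 : ℝ) ^ (n - j) * (n.choose j : ℝ) *
              (((j : ℝ) + 1) * (q - 1) / (q ^ (j + 1) - 1)) * ((q - 1) * x + 1) ^ j := hk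
      _ = _ := by
          rw [Finset.mul_sum, Finset.mul_sum]
          apply Finset.sum_congr rfl
          intro j _
          push_cast
          ring
  have hconst : (Iq q (cB q n)).coeff 0 = (gPoly q n).coeff 0 := by
    rw [Iq_coeff_zero, Polynomial.coeff_zero_eq_eval_zero, gPoly]
    simp [Polynomial.eval_finset_sum]
  have hzero : Polynomial.derivative (Iq q (cB q n) - gPoly q n) = 0 := by
    rw [Polynomial.derivative_sub, hdG, sub_self]
  have := Polynomial.eq_C_of_derivative_eq_zero hzero
  rw [Polynomial.coeff_sub, hconst, sub_self, map_zero] at this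
  exact sub_eq_zero.mp this

lemma gPoly_funceq {q : ℝ} (hq : 0 < q) (hq1 : q ≠ 1) (n : ℕ) :
    (gPoly q n).comp (Polynomial.C q * Polynomial.X + 1) - gPoly q n
      = Polynomial.C (q - 1) * Polynomial.X ^ (n + 1) + Polynomial.X ^ n := by
  have hr : q - 1 ≠ 0 := sub_ne_zero.mpr hq1
  apply Polynomial.funext
  intro x
  rw [gPoly]
  simp only [Polynomial.eval_sub, Polynomial.eval_comp, Polynomial.eval_add, Polynomial.eval_mul,
    Polynomial.eval_C, Polynomial.eval_X, Polynomial.eval_one, Polynomial.eval_pow,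
    Polynomial.eval_finset_sum]
  rw [← mul_sub, ← Finset.sum_sub_distrib]
  have hterm : ∀ j ∈ Finset.range (n + 1),
      (-1 : ℝ) ^ (n - j) * (n.choose j : ℝ) / (q ^ (j + 1) - 1) *
            (((q - 1) * (q * x + 1) + 1) ^ (j + 1) - 1)
          - (-1 : ℝ) ^ (n - j) * (n.choose j : ℝ) / (q ^ (j + 1) - 1) *
            (((q - 1) * x + 1) ^ (j + 1) - 1)
        = ((q - 1) * x + 1) * (((q - 1) * x + 1) ^ j * (-1 : ℝ) ^ (n - j) * (n.choose j : ℝ)) := by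
    intro j _
    have hd : q ^ (j + 1) - 1 ≠ 0 := sub_ne_zero.mpr (qpow_ne_one hq hq1 (Nat.succ_ne_zero j))
    have h1 : (q - 1) * (q * x + 1) + 1 = q * ((q - 1) * x + 1) := by ring
    rw [h1, mul_pow, ← mul_sub]
    have h2 : q ^ (j + 1) * ((q - 1) * x + 1) ^ (j + 1) - 1 - (((q - 1) * x + 1) ^ (j + 1) - 1)
        = (q ^ (j + 1) - 1) * ((q - 1) * x + 1) ^ (j + 1) := by ring
    rw [h2]
    rw [div_mul_eq_mul_div, mul_comm ((q ^ (j + 1) - 1)), mul_div_assoc, mul_div_assoc,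
      div_self hd, mul_one]
    rw [pow_succ]
    ring
  rw [Finset.sum_congr rfl hterm, ← Finset.mul_sum, ← add_pow]
  have h3 : ((q - 1) * x + 1 + -1 : ℝ) = (q - 1) * x := by ring
  rw [h3, mul_pow]
  have h4 : ((q - 1 : ℝ) ^ n)⁻¹ * (((q - 1) * x + 1) * ((q - 1) ^ n * x ^ n))
      = ((q - 1) * x + 1) * x ^ n := by
    field_simp
  rw [h4]
  ring

/-- Explicit expansion of `B_{n,q}`:
`B_{n,q}(X) = Σ_{k=0}^n Σ_{i=0}^k C(n,k) C(k,i) β_{k,q} (q−1)^i ([n+i−k+1]_q/(n+i−k+1)) X^{n+i−k}`. -/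
theorem stmt_13 (q : ℝ) (hq : 0 < q) (hq1 : q ≠ 1) (n : ℕ) (B : Polynomial ℝ)
    (hB : (Iq q B).comp (Polynomial.C q * Polynomial.X + 1) - Iq q B
      = Polynomial.C (q - 1) * Polynomial.X ^ (n + 1) + Polynomial.X ^ n)
    (x : ℝ) :
    B.eval x
      = ∑ k ∈ Finset.range (n + 1), ∑ i ∈ Finset.range (k + 1),
          (n.choose k : ℝ) * (k.choose i : ℝ) * carlitzBetaNum q k * (q - 1) ^ i *
            (qnum q ((n + i - k + 1 : ℕ) : ℝ) / ((n + i - k + 1 : ℕ) : ℝ)) *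
            x ^ (n + i - k) := by
  have hC : (Iq q (cB q n)).comp (Polynomial.C q * Polynomial.X + 1) - Iq q (cB q n)
      = Polynomial.C (q - 1) * Polynomial.X ^ (n + 1) + Polynomial.X ^ n := by
    rw [Iq_cB hq hq1 n]; exact gPoly_funceq hq hq1 n
  have hBC : B = cB q n := by
    apply Iq_inj hq hq1
    have hD : (Iq q B - Iq q (cB q n)).comp (Polynomial.C q * Polynomial.X + 1)
        = Iq q B - Iq q (cB q n) := by
      have h3 := hB.trans hC.symm
      rw [Polynomial.sub_comp]
      linear_combination h3
    have h0 : (Iq q B - Iq q (cB q n)).coeff 0 = 0 := by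
      simp [Polynomial.coeff_sub, Iq_coeff_zero]
    exact sub_eq_zero.mp (comp_linear_eq_self hq hq1 _ hD h0)
  rw [hBC, cB]
  simp [Polynomial.eval_finset_sum]
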